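/- Let H be a complex Hilbert space, M ⊆ B(H) a von Neumann algebra, and x ∈ M. Then there exists a family (q_j)_{j∈J} of mutually orthogonal σ-finite projections in M such that q_j x = q_j x q_j for each j and x = Σ_{j∈J} q_j x q_j in the strong operator topology, i.e., for every vector η ∈ H the family (q_j x q_j η)_{j∈J} is summable in H with sum x η. -/

import Mathlib

set_option synthInstance.maxHeartbeats 1000000
set_option maxHeartbeats 1000000

noncomputable section

namespace Paper

open scoped ComplexConjugate

variable {H : Type*} [NormedAddCommGroup H] [InnerProductSpace ℂ H] [CompleteSpace H]

variable (M : VonNeumannAlgebra H)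

/-- The von Neumann algebra `M` regarded as a closed subspace of `B(H)`;
its subtype `↥(carrier M)` is the Banach space `M`. -/
def carrier : Submodule ℂ (H →L[ℂ] H) := M.toStarSubalgebra.toSubalgebra.toSubmodule

theorem mem_carrier {x : H →L[ℂ] H} : x ∈ carrier M ↔ x ∈ M := Iff.rfl

instance (priority := 10000) : NormedAddCommGroup ↥(carrier M) := inferInstance
instance (priority := 10000) : NormedSpace ℂ ↥(carrier M) := inferInstance
instance (priority := 10000) : NormedAddCommGroup (↥(carrier M) →L[ℂ] ℂ) := inferInstance
instance (priority := 10000) : NormedSpace ℂ (↥(carrier M) →L[ℂ] ℂ) := inferInstance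
instance (priority := 10000) : ContinuousAdd (↥(carrier M) →L[ℂ] ℂ) := by
  have h : IsTopologicalAddGroup (↥(carrier M) →L[ℂ] ℂ) := inferInstance
  exact h.toContinuousAdd

/-- The vector functional `ω_{ξ,η} : x ↦ ⟪x ξ, η⟫` (inner product linear in the first slot,
i.e. `⟪u, v⟫ = inner v u` in Mathlib's convention), as a continuous linear functional on `M`. -/
def vecFunctional (ξ η : H) : ↥(carrier M) →L[ℂ] ℂ :=
  (innerSL ℂ η).comp ((ContinuousLinearMap.apply ℂ H ξ).comp (carrier M).subtypeL)

theorem vecFunctional_apply (ξ η : H) (x : ↥(carrier M)) :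
    vecFunctional M ξ η x = inner ℂ η ((x : H →L[ℂ] H) ξ) := rfl

/-- The predual `M_*` of `M`: the norm-closed linear span, inside the dual of `M`,
of the vector functionals `ω_{ξ,η}`. -/
def predual : Submodule ℂ (↥(carrier M) →L[ℂ] ℂ) :=
  (Submodule.span ℂ {φ | ∃ ξ η : H, φ = vecFunctional M ξ η}).topologicalClosure

theorem vecFunctional_mem_predual (ξ η : H) : vecFunctional M ξ η ∈ predual M :=
  Submodule.le_topologicalClosure _ (Submodule.subset_span ⟨ξ, η, rfl⟩)

instance (priority := 10000) : NormedAddCommGroup ↥(predual M) := inferInstance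
instance (priority := 10000) : NormedSpace ℂ ↥(predual M) := inferInstance
instance (priority := 10000) : NormedSpace ℝ ↥(predual M) := inferInstance
instance (priority := 10000) : NormedAddCommGroup (↥(predual M) →L[ℂ] ℂ) := inferInstance
instance (priority := 10000) : NormedSpace ℂ (↥(predual M) →L[ℂ] ℂ) := inferInstance

/-- a projection belonging to `M` -/
def IsProjectionIn (p : H →L[ℂ] H) : Prop := p ∈ M ∧ IsSelfAdjoint p ∧ p * p = p

/-- `M` is σ-finite: every family of pairwise orthogonal nonzero projections in `M`
is countable. -/
def SigmaFinite : Prop :=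
  ∀ P : Set (H →L[ℂ] H),
    (∀ p ∈ P, IsProjectionIn M p ∧ p ≠ 0) →
    (∀ p ∈ P, ∀ q ∈ P, p ≠ q → p * q = 0) →
    P.Countable

/-- A projection `q ∈ M` is σ-finite if every family of pairwise orthogonal nonzero
projections `p ∈ M` with `p = q p q` is countable. -/
def IsSigmaFiniteProjection (q : H →L[ℂ] H) : Prop :=
  IsProjectionIn M q ∧
    ∀ P : Set (H →L[ℂ] H),
      (∀ p ∈ P, IsProjectionIn M p ∧ p ≠ 0 ∧ p = q * p * q) →
      (∀ p ∈ P, ∀ r ∈ P, p ≠ r → p * r = 0) →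
      P.Countable

/-- `ξ` is a generating vector for the projection `p ∈ M`:
the set `M'ξ = {a ξ : a ∈ M'}` is dense in `pH`, the range of `p`. -/
def IsGeneratingVector (p : H →L[ℂ] H) (ξ : H) : Prop :=
  closure {v : H | ∃ a ∈ M.commutant, v = a ξ} = Set.range p

/-- a cyclic projection in `M` -/
def IsCyclicProjection (p : H →L[ℂ] H) : Prop :=
  IsProjectionIn M p ∧ ∃ ξ : H, IsGeneratingVector M p ξ

/-- The self-adjoint part `M_*^{sa}` of the predual: those `ω ∈ M_*` with
`ω (x*) = conj (ω x)` for all `x ∈ M`; a real-linear subspace of `M_*`. -/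
def predualSA : Submodule ℝ ↥(predual M) where
  carrier := {ω | ∀ (x : H →L[ℂ] H) (hx : x ∈ M),
    (ω : ↥(carrier M) →L[ℂ] ℂ) ⟨star x, (mem_carrier M).mpr (star_mem hx)⟩ =
      conj ((ω : ↥(carrier M) →L[ℂ] ℂ) ⟨x, hx⟩)}
  add_mem' := by
    intro a b ha hb x hx
    simp only [Submodule.coe_add, ContinuousLinearMap.add_apply, ha x hx, hb x hx, map_add]
  zero_mem' := by
    intro x hx
    simp only [ZeroMemClass.coe_zero, ContinuousLinearMap.zero_apply, map_zero]
  smul_mem' := by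
    intro r ω hω x hx
    simp only [SetLike.val_smul_of_tower, ContinuousLinearMap.coe_smul', Pi.smul_apply, hω x hx]
    rw [show (conj ((ω : ↥(carrier M) →L[ℂ] ℂ) ⟨x, hx⟩)) = star ((ω : ↥(carrier M) →L[ℂ] ℂ) ⟨x, hx⟩) from rfl,
      show (conj (r • (ω : ↥(carrier M) →L[ℂ] ℂ) ⟨x, hx⟩)) = star (r • (ω : ↥(carrier M) →L[ℂ] ℂ) ⟨x, hx⟩) from rfl,
      star_smul, star_trivial r]

instance (priority := 10000) : NormedAddCommGroup ↥(predualSA M) := inferInstance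
instance (priority := 10000) : NormedSpace ℝ ↥(predualSA M) := inferInstance
instance (priority := 10000) : NormedAddCommGroup (↥(predualSA M) →L[ℝ] ℝ) := inferInstance
instance (priority := 10000) : NormedSpace ℝ (↥(predualSA M) →L[ℝ] ℝ) := inferInstance

/-!
By Zorn's lemma there is a maximal family `Q` of pairwise orthogonal σ-finite projections of `M`
commuting with `x` and `x*`. If a vector `ζ` is killed by every `q ∈ Q`, let `P` be the projection
onto the closed span `[M' W ζ]`, where `W` is the monoid of words in `x` and `x*`. Its range is
invariant under `M'`, `x` and `x*`, so `P ∈ M'' = M` and `P` commutes with `x` and `x*`; it is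
orthogonal to `Q`; and it is σ-finite, because a nonzero subprojection in `M` (which commutes with
`M'`) must be nonzero at one of the countably many vectors `w ζ`, while pairwise orthogonal
projections are nonzero at a fixed vector only countably often (Bessel). Maximality then forces
`P ∈ Q`, hence `ζ = P ζ = 0`. So `∑ q = 1` strongly, and `x η = ∑ x q η = ∑ q x q η`.
-/

open scoped InnerProductSpace
open Submodule Module.End

theorem isStarProjection_sum {ι R : Type*} [NonUnitalSemiring R] [StarRing R] {p : ι → R}
    (hp : ∀ i, IsStarProjection (p i)) (horth : Pairwise fun i j => p i * p j = 0)
    (s : Finset ι) : IsStarProjection (∑ i ∈ s, p i) := by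
  classical
  induction s using Finset.induction_on with
  | empty => simp [IsStarProjection.zero]
  | insert i s hi ih =>
    rw [Finset.sum_insert hi]
    refine (hp i).add ih ?_
    rw [Finset.mul_sum]
    exact Finset.sum_eq_zero fun j hj => horth (ne_of_mem_of_not_mem hj hi).symm

section StarProjection

variable {𝕜 E ι : Type*} [RCLike 𝕜] [NormedAddCommGroup E] [InnerProductSpace 𝕜 E]
  [CompleteSpace E]

theorem isOrtho_range_of_mul_eq_zero {p q : E →L[𝕜] E} (hp : IsSelfAdjoint p) (hpq : p * q = 0) :
    p.range ⟂ q.range := by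
  rw [isOrtho_iff_inner_eq]
  rintro _ ⟨u, rfl⟩ _ ⟨v, rfl⟩
  have hsymm := hp.isSymmetric u (q v)
  simp only [ContinuousLinearMap.coe_coe] at hsymm ⊢
  rw [hsymm, ← mul_apply_eq_comp, hpq, zero_apply, inner_zero_right]

variable {p : ι → E →L[𝕜] E}

theorem summable_apply_of_pairwise_mul_eq_zero (hp : ∀ i, IsStarProjection (p i))
    (horth : Pairwise fun i j => p i * p j = 0) (v : E) : Summable fun i => p i v := by
  set V : ι → Submodule 𝕜 E := fun i => (p i).range
  have hV : OrthogonalFamily 𝕜 (fun i => V i) fun i => (V i).subtypeₗᵢ :=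
    OrthogonalFamily.of_pairwise fun i j hij =>
      isOrtho_range_of_mul_eq_zero (hp i).isSelfAdjoint (horth hij)
  let l : ∀ i, V i := fun i => ⟨p i v, LinearMap.mem_range_self _ v⟩
  -- Bessel's inequality: a finite sum of the `p i` is again a star projection, of norm `≤ 1`.
  have hbessel (s : Finset ι) : ∑ i ∈ s, ‖l i‖ ^ 2 ≤ ‖v‖ ^ 2 := by
    rw [← hV.norm_sum l s]
    have hnorm : ‖(∑ i ∈ s, p i) v‖ ≤ 1 * ‖v‖ :=
      ContinuousLinearMap.le_of_opNorm_le _ ((isStarProjection_sum hp horth s).norm_le) v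
    rw [sum_apply, one_mul] at hnorm
    gcongr
    exact hnorm
  exact (hV.summable_iff_norm_sq_summable l).2 (summable_of_sum_le (fun _ => sq_nonneg _) hbessel)

theorem apply_tsum_apply (hp : ∀ i, IsStarProjection (p i))
    (horth : Pairwise fun i j => p i * p j = 0) (v : E) (j : ι) :
    p j (∑' i, p i v) = p j v := by
  rw [ContinuousLinearMap.map_tsum _ (summable_apply_of_pairwise_mul_eq_zero hp horth v),
    tsum_eq_single j fun i hij => by rw [← mul_apply_eq_comp, horth hij.symm]; rfl,
    ← mul_apply_eq_comp, (hp j).isIdempotentElem.eq]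

theorem countable_setOf_apply_ne_zero {P : Set (E →L[𝕜] E)} (hP : ∀ p ∈ P, IsStarProjection p)
    (horth : P.Pairwise fun p q => p * q = 0) (v : E) : {p ∈ P | p v ≠ 0}.Countable := by
  have hsupp := (summable_apply_of_pairwise_mul_eq_zero (p := ((↑) : P → E →L[𝕜] E))
    (fun p => hP p p.2) (fun p q h => horth p.2 q.2 (Subtype.coe_ne_coe.2 h)) v).countable_support
  convert hsupp.image Subtype.val using 1
  ext p
  simp [Function.support, and_comm]

theorem commute_starProjection {K : Submodule 𝕜 E} [K.HasOrthogonalProjection] {T : E →L[𝕜] E}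
    (hT : K ∈ invtSubmodule (T : E →ₗ[𝕜] E))
    (hT' : K ∈ invtSubmodule ((star T : E →L[𝕜] E) : E →ₗ[𝕜] E)) :
    Commute K.starProjection T :=
  (ContinuousLinearMap.IsIdempotentElem.commute_iff K.isIdempotentElem_starProjection).2
    ⟨by rwa [range_starProjection], by
      rw [ker_starProjection]
      exact ContinuousLinearMap.orthogonal_mem_invtSubmodule hT'⟩

end StarProjection

theorem topologicalClosure_span_mem_invtSubmodule {𝕜 E : Type*} [RCLike 𝕜] [NormedAddCommGroup E]
    [InnerProductSpace 𝕜 E] {G : Set E} {T : E →L[𝕜] E} (hT : Set.MapsTo T G G) :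
    (span 𝕜 G).topologicalClosure ∈ invtSubmodule (T : E →ₗ[𝕜] E) :=
  topologicalClosure_mem_invtSubmodule <| by
    rw [mem_invtSubmodule_iff_map_le, map_span_le]
    exact fun v hv => subset_span (hT hv)

theorem _root_.Submonoid.countable_closure {G : Type*} [Monoid G] {s : Set G} (hs : s.Countable) :
    (Submonoid.closure s : Set G).Countable := by
  have := hs.to_subtype
  rw [Submonoid.closure_eq_image_prod, ← Set.range_list_map_coe]
  exact (Set.countable_range _).image _

theorem isProjectionIn_iff {p : H →L[ℂ] H} : IsProjectionIn M p ↔ p ∈ M ∧ IsStarProjection p :=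
  and_congr_right' ⟨fun h => ⟨h.2, h.1⟩, fun h => ⟨h.2, h.1⟩⟩

theorem IsSigmaFiniteProjection.isStarProjection {q : H →L[ℂ] H}
    (hq : IsSigmaFiniteProjection M q) : IsStarProjection q :=
  ((isProjectionIn_iff M).1 hq.1).2

section OrbitSpan

variable (N : Submonoid (H →L[ℂ] H)) (ζ : H)

def orbitSpan : Submodule ℂ H :=
  (span ℂ (Set.image2 (fun a w : H →L[ℂ] H => a (w ζ)) (M.commutant : Set (H →L[ℂ] H)) N)
    ).topologicalClosure

theorem self_mem_orbitSpan : ζ ∈ orbitSpan M N ζ :=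
  le_topologicalClosure _ (subset_span ⟨1, one_mem _, 1, one_mem _, rfl⟩)

instance : CompleteSpace (orbitSpan M N ζ) :=
  (isClosed_topologicalClosure _).completeSpace_coe

variable {N}

theorem orbitSpan_mem_invtSubmodule_of_mem_commutant {a : H →L[ℂ] H} (ha : a ∈ M.commutant) :
    orbitSpan M N ζ ∈ invtSubmodule (a : H →ₗ[ℂ] H) :=
  topologicalClosure_span_mem_invtSubmodule <| by
    rintro _ ⟨b, hb, w, hw, rfl⟩
    exact ⟨a * b, mul_mem ha hb, w, hw, rfl⟩

theorem orbitSpan_mem_invtSubmodule_of_mem (hNM : (N : Set (H →L[ℂ] H)) ⊆ M)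
    {n : H →L[ℂ] H} (hn : n ∈ N) : orbitSpan M N ζ ∈ invtSubmodule (n : H →ₗ[ℂ] H) :=
  topologicalClosure_span_mem_invtSubmodule <| by
    rintro _ ⟨b, hb, w, hw, rfl⟩
    refine ⟨b, hb, n * w, mul_mem hn hw, ?_⟩
    change b ((n * w) ζ) = n (b (w ζ))
    rw [← mul_apply_eq_comp n b, VonNeumannAlgebra.mem_commutant_iff.1 hb n (hNM hn),
      mul_apply_eq_comp, mul_apply_eq_comp]

theorem starProjection_orbitSpan_mem : (orbitSpan M N ζ).starProjection ∈ M :=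
  (VonNeumannAlgebra.IsStarProjection.mem_iff isStarProjection_starProjection M).2 fun _ ha => by
    rw [range_starProjection]
    exact orbitSpan_mem_invtSubmodule_of_mem_commutant M ζ ha

theorem commute_starProjection_orbitSpan (hNM : (N : Set (H →L[ℂ] H)) ⊆ M)
    {n : H →L[ℂ] H} (hn : n ∈ N) (hn' : star n ∈ N) :
    Commute (orbitSpan M N ζ).starProjection n :=
  commute_starProjection (orbitSpan_mem_invtSubmodule_of_mem M ζ hNM hn)
    (orbitSpan_mem_invtSubmodule_of_mem M ζ hNM hn')

theorem mul_starProjection_orbitSpan_eq_zero {y : H →L[ℂ] H} (hy : y ∈ M)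
    (h : ∀ w ∈ N, y (w ζ) = 0) : y * (orbitSpan M N ζ).starProjection = 0 := by
  have hker : orbitSpan M N ζ ≤ LinearMap.ker (y : H →ₗ[ℂ] H) := by
    refine topologicalClosure_minimal _ ?_ y.isClosed_ker
    rw [span_le]
    rintro _ ⟨a, ha, w, hw, rfl⟩
    change y (a (w ζ)) = 0
    rw [← mul_apply_eq_comp, VonNeumannAlgebra.mem_commutant_iff.1 ha y hy, mul_apply_eq_comp,
      h w hw, map_zero]
  ext v
  exact hker (starProjection_apply_mem _ v)

theorem isSigmaFiniteProjection_starProjection_orbitSpan (hN : (N : Set (H →L[ℂ] H)).Countable) :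
    IsSigmaFiniteProjection M (orbitSpan M N ζ).starProjection := by
  refine ⟨(isProjectionIn_iff M).2 ⟨starProjection_orbitSpan_mem M ζ,
    isStarProjection_starProjection⟩, fun P hP horth => ?_⟩
  have hcover : P ⊆ ⋃ w ∈ N, {p ∈ P | p (w ζ) ≠ 0} := fun p hp => by
    obtain ⟨hpM, hp0, hpq⟩ := hP p hp
    by_contra hvanish
    simp only [Set.mem_iUnion, Set.mem_ofPred_eq, not_exists, not_and, not_not] at hvanish
    apply hp0
    rw [hpq, mul_assoc, mul_starProjection_orbitSpan_eq_zero M ζ hpM.1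
      fun w hw => hvanish w hw hp, mul_zero]
  exact (hN.biUnion fun w _ => countable_setOf_apply_ne_zero
    (fun p hp => ((isProjectionIn_iff M).1 (hP p hp).1).2) horth (w ζ)).mono hcover

end OrbitSpan

theorem exists_maximal_pairwise {α : Type*} (φ : α → Prop) (r : α → α → Prop) :
    ∃ Q : Set α, Maximal (fun Q : Set α => (∀ q ∈ Q, φ q) ∧ Q.Pairwise r) Q :=
  zorn_subset _ fun c hcS hc =>
    ⟨⋃₀ c, ⟨fun _ ⟨_, hs, hq⟩ => (hcS hs).1 _ hq, hc.pairwise_sUnion.2 fun _ hs => (hcS hs).2⟩,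
      fun _ hs => Set.subset_sUnion_of_mem hs⟩

def IsReducingFamily (x : H →L[ℂ] H) (Q : Set (H →L[ℂ] H)) : Prop :=
  (∀ q ∈ Q, IsSigmaFiniteProjection M q ∧ Commute q x ∧ Commute q (star x)) ∧
    Q.Pairwise fun q r => q * r = 0

theorem eq_zero_of_maximal_isReducingFamily {x : H →L[ℂ] H} (hx : x ∈ M) {Q : Set (H →L[ℂ] H)}
    (hQ : Maximal (IsReducingFamily M x) Q) {ζ : H} (hζ : ∀ q ∈ Q, q ζ = 0) : ζ = 0 := by
  set N := Submonoid.closure {x, star x}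
  have hxN : x ∈ N := Submonoid.subset_closure (Set.mem_insert _ _)
  have hxN' : star x ∈ N := Submonoid.subset_closure (Set.mem_insert_of_mem _ rfl)
  have hNM : (N : Set (H →L[ℂ] H)) ⊆ M :=
    Submonoid.closure_le (S := M.toSubmonoid).2 (Set.insert_subset hx (by simpa using star_mem hx))
  set P := (orbitSpan M N ζ).starProjection
  have hQP : ∀ q ∈ Q, q * P = 0 := fun q hq => by
    obtain ⟨hqσ, hqx, hqx'⟩ := hQ.prop.1 q hq
    refine mul_starProjection_orbitSpan_eq_zero M ζ hqσ.1.1 fun w hw => ?_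
    have hqw : Commute q w := Submonoid.closure_le (S := Submonoid.centralizer {q}).2
      (by simp [Set.insert_subset_iff, Set.mem_centralizer_iff, hqx.eq, hqx'.eq]) hw q rfl
    rw [← mul_apply_eq_comp, hqw.eq, mul_apply_eq_comp, hζ q hq, map_zero]
  have hPQ : ∀ q ∈ Q, P * q = 0 := fun q hq => by
    have hPsa : IsSelfAdjoint P := isSelfAdjoint_starProjection _
    simpa [hPsa.star_eq, (hQ.prop.1 q hq).1.isStarProjection.isSelfAdjoint.star_eq] using
      congrArg star (hQP q hq)
  have hfamily : IsReducingFamily M x (insert P Q) := by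
    refine ⟨Set.forall_mem_insert.2 ⟨⟨isSigmaFiniteProjection_starProjection_orbitSpan M ζ
      (Submonoid.countable_closure (by simp)), commute_starProjection_orbitSpan M ζ hNM hxN
      (by simpa using hxN'), commute_starProjection_orbitSpan M ζ hNM hxN' (by simpa using hxN)⟩,
      hQ.prop.1⟩, Set.pairwise_insert.2 ⟨hQ.prop.2, fun q hq _ => ⟨hPQ q hq, hQP q hq⟩⟩⟩
  rw [← starProjection_eq_self_iff.2 (self_mem_orbitSpan M N ζ)]
  exact hζ P (hQ.mem_of_prop_insert hfamily)

theorem exists_orthogonal_sigmaFinite_decomposition (x : H →L[ℂ] H) (hx : x ∈ M) :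
    ∃ Q : Set (H →L[ℂ] H),
      (∀ q ∈ Q, IsSigmaFiniteProjection M q) ∧
      (∀ q ∈ Q, ∀ r ∈ Q, q ≠ r → q * r = 0) ∧
      (∀ q ∈ Q, q * x = q * x * q) ∧
      ∀ η : H, HasSum (fun q : Q => ((q : H →L[ℂ] H) * x * (q : H →L[ℂ] H)) η) (x η) := by
  obtain ⟨Q, hQ⟩ : ∃ Q, Maximal (IsReducingFamily M x) Q := exists_maximal_pairwise _ _
  obtain ⟨hQσ, hQorth⟩ := hQ.prop
  have hproj (q : Q) : IsStarProjection (q : H →L[ℂ] H) := (hQσ q q.2).1.isStarProjection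
  have horth : Pairwise fun q r : Q => (q : H →L[ℂ] H) * r = 0 :=
    fun q r h => hQorth q.2 r.2 (Subtype.coe_ne_coe.2 h)
  have hreduce : ∀ q ∈ Q, q * x * q = x * q := fun q hq => by
    rw [(hQσ q hq).2.1.eq, mul_assoc, (hQσ q hq).1.isStarProjection.isIdempotentElem.eq]
  refine ⟨Q, fun q hq => (hQσ q hq).1, fun q hq r hr => hQorth hq hr,
    fun q hq => by rw [hreduce q hq, (hQσ q hq).2.1.eq], fun η => ?_⟩
  have hη : ∑' q : Q, (q : H →L[ℂ] H) η = η := by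
    refine (sub_eq_zero.1 (eq_zero_of_maximal_isReducingFamily M hx hQ fun q hq => ?_)).symm
    rw [map_sub, apply_tsum_apply hproj horth η ⟨q, hq⟩, sub_self]
  have hsum := ((summable_apply_of_pairwise_mul_eq_zero hproj horth η).hasSum).mapL x
  rw [hη] at hsum
  simpa only [hreduce _ (Subtype.prop _), mul_apply_eq_comp] using hsum

end Paper
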